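/- For the complete graph K_n, the Kuramoto variety V(I_{K_n}) equals the union of the Segre variety Σ (zeros of all 2×2 minors x_i y_j − x_j y_i) and the linear variety V(L_1, L_2), where L_1 = Σ x_i and L_2 = Σ y_i. -/
import Mathlib

/-- For the complete graph `K_n`, the Kuramoto variety equals the union of the (affine cone
over the) Segre variety and the linear variety `V(L₁, L₂)` with `L₁ = ∑ x_i`, `L₂ = ∑ y_i`. -/
theorem complete_graph_kuramoto_variety (n : ℕ) :
    {p : (Fin n ⊕ Fin n) → ℂ | ∀ i : Fin n, ∑ j ∈ Finset.univ.erase i,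
        (p (Sum.inl j) * p (Sum.inr i) - p (Sum.inl i) * p (Sum.inr j)) = 0}
    = {p : (Fin n ⊕ Fin n) → ℂ | ∀ i j : Fin n,
        p (Sum.inl i) * p (Sum.inr j) - p (Sum.inl j) * p (Sum.inr i) = 0}
      ∪ {p : (Fin n ⊕ Fin n) → ℂ |
          ∑ i : Fin n, p (Sum.inl i) = 0 ∧ ∑ i : Fin n, p (Sum.inr i) = 0} := by
  ext p
  simp only [Set.mem_setOf_eq, Set.mem_union]
  set Sx := ∑ i : Fin n, p (Sum.inl i) with hSx
  set Sy := ∑ i : Fin n, p (Sum.inr i) with hSy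
  have key : ∀ i : Fin n, ∑ j ∈ Finset.univ.erase i,
      (p (Sum.inl j) * p (Sum.inr i) - p (Sum.inl i) * p (Sum.inr j))
      = Sx * p (Sum.inr i) - p (Sum.inl i) * Sy := by
    intro i
    rw [Finset.sum_sub_distrib, ← Finset.sum_mul, ← Finset.mul_sum,
      Finset.sum_erase_eq_sub (Finset.mem_univ i),
      Finset.sum_erase_eq_sub (Finset.mem_univ i), hSx, hSy]
    ring
  constructor
  · intro h
    by_cases hseg : ∀ i j : Fin n,
        p (Sum.inl i) * p (Sum.inr j) - p (Sum.inl j) * p (Sum.inr i) = 0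
    · exact Or.inl hseg
    · push_neg at hseg
      obtain ⟨i, j, hij⟩ := hseg
      have hi := (key i) ▸ h i
      have hj := (key j) ▸ h j
      refine Or.inr ⟨?_, ?_⟩
      · have hx : Sx * (p (Sum.inl i) * p (Sum.inr j) - p (Sum.inl j) * p (Sum.inr i)) = 0 := by
          linear_combination p (Sum.inl i) * hj - p (Sum.inl j) * hi
        exact (mul_eq_zero.mp hx).resolve_right hij
      · have hy : Sy * (p (Sum.inl i) * p (Sum.inr j) - p (Sum.inl j) * p (Sum.inr i)) = 0 := by
          linear_combination p (Sum.inr i) * hj - p (Sum.inr j) * hi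
        exact (mul_eq_zero.mp hy).resolve_right hij
  · rintro (h | ⟨h1, h2⟩) i
    · exact Finset.sum_eq_zero fun j _ => h j i
    · rw [key i, h1, h2]
      ring
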